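/- Suppose Assumptions 1–3 hold with constants ε ≥ 0, δ ∈ (0,1], γ > 0, and that Condition 1 is violated with margin C′ > 0: there exists an environment-partition function ρ₀ with H[Y | X_V] − H[Y | (ρ₀(Z), X_V)] ≥ C′. Suppose moreover there exists a feature mask Φ̄ ⊆ {1,…,d} with Φ̄ ≠ V such that H[Y | (ρ(Z), X_{Φ̄})] = H[Y | X_{Φ̄}] for every environment-partition function ρ. If ε < δC′/4 and λ > (H[Y] + 2ε)/(δC′ − 4ε), then L̂(Φ̄) < L̂(V); in particular there exists a feature mask Φ′ ≠ V with L̂(Φ′) < L̂(V), so the ZIN objective does not select the invariant features. -/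

import Mathlib

open MeasureTheory ProbabilityTheory
open scoped ENNReal

/-- `- log p` for `p ∈ [0, ∞]`, valued in `[0, ∞]`, with `- log 0 = ∞`. -/
noncomputable def negLog (p : ℝ≥0∞) : ℝ≥0∞ :=
  if p = 0 then ⊤ else ENNReal.ofReal (-Real.log p.toReal)

/-- Conditional Shannon entropy `H[Y | W]` (natural logarithm) of a finite-valued random
variable `Y` given a finite-valued random variable `W`, under the measure `μ`. -/
noncomputable def condEnt {Ω 𝒴 𝒲 : Type*} [MeasurableSpace Ω] (μ : Measure Ω)
    [Fintype 𝒴] [Fintype 𝒲] (Y : Ω → 𝒴) (W : Ω → 𝒲) : ℝ :=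
  ∑ w : 𝒲, ∑ y : 𝒴,
    -((μ {ω | Y ω = y ∧ W ω = w}).toReal *
      Real.log ((μ {ω | Y ω = y ∧ W ω = w}).toReal / (μ {ω | W ω = w}).toReal))

/-- Shannon entropy `H[Y]` (natural logarithm) of a finite-valued random variable `Y`. -/
noncomputable def shEnt {Ω 𝒴 : Type*} [MeasurableSpace Ω] (μ : Measure Ω)
    [Fintype 𝒴] (Y : Ω → 𝒴) : ℝ :=
  ∑ y : 𝒴, -((μ {ω | Y ω = y}).toReal * Real.log (μ {ω | Y ω = y}).toReal)

/-- Expected cross-entropy risk `E[- log f(X)(Y)]` of a probabilistic classifier `f`,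
valued in `[0, ∞]`. -/
noncomputable def ceRisk {Ω α 𝒴 : Type*} [MeasurableSpace Ω] (μ : Measure Ω)
    [Fintype α] [Fintype 𝒴] (X : Ω → α) (Y : Ω → 𝒴) (f : α → PMF 𝒴) : ℝ≥0∞ :=
  ∑ x : α, ∑ y : 𝒴, μ {ω | X ω = x ∧ Y ω = y} * negLog (f x y)

/-- Environment-wise weighted cross-entropy risk `E[1{ρ(Z) = k} · (- log f(X)(Y))]`. -/
noncomputable def ceRiskW {Ω α 𝒴 𝒵 : Type*} [MeasurableSpace Ω] (μ : Measure Ω)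
    [Fintype α] [Fintype 𝒴] {K : ℕ}
    (X : Ω → α) (Y : Ω → 𝒴) (Z : Ω → 𝒵) (ρ : 𝒵 → Fin K) (k : Fin K)
    (f : α → PMF 𝒴) : ℝ≥0∞ :=
  ∑ x : α, ∑ y : 𝒴, μ {ω | ρ (Z ω) = k ∧ X ω = x ∧ Y ω = y} * negLog (f x y)

/-- The masked feature tuple `X_Φ = (X^j)_{j ∈ Φ}` of a feature vector `X`. -/
def maskFun {Ω 𝒳 : Type*} {d : ℕ} (X : Ω → Fin d → 𝒳) (Φ : Finset (Fin d)) :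
    Ω → ({ j : Fin d // j ∈ Φ } → 𝒳) :=
  fun ω j => X ω j.1

/-- The ZIN objective `L̂(Φ)`: infimum over classifiers `f ∈ 𝓕 Φ` of the supremum over
environment-partition functions `ρ : 𝒵 → Fin K` of the cross-entropy risk plus `λ` times the
invariance penalty. -/
noncomputable def Lhat {Ω 𝒳 𝒴 𝒵 : Type*} [MeasurableSpace Ω] (μ : Measure Ω)
    [Fintype 𝒳] [Fintype 𝒴] (K : ℕ) {d : ℕ}
    (X : Ω → Fin d → 𝒳) (Y : Ω → 𝒴) (Z : Ω → 𝒵)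
    (𝓕 : Finset (Fin d) → Set ((Fin d → 𝒳) → PMF 𝒴)) (lam : ℝ)
    (Φ : Finset (Fin d)) : ℝ≥0∞ :=
  ⨅ f ∈ 𝓕 Φ, ⨆ ρ : 𝒵 → Fin K,
    ceRisk μ X Y f + ENNReal.ofReal lam *
      ∑ k : Fin K, (ceRiskW μ X Y Z ρ k f - ⨅ g ∈ 𝓕 Φ, ceRiskW μ X Y Z ρ k g)

/-!
On an invariant mask `Φ̄` the optimal environment-wise risks add up to `H[Y | (ρ(Z), X_Φ̄)] =
H[Y | X_Φ̄]` for every partition `ρ`, so a near-optimal classifier on `Φ̄` (Assumption 1) pays an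
invariance penalty of at most `ε`: `L̂(Φ̄) ≤ H[Y | X_Φ̄] + ε + λε`. On `V`, every classifier has
risk at least `H[Y | X_V]`, while under the violating partition `ρ₀` the environment-wise optima
sum to at most `H[Y | (ρ₀(Z), X_V)] + ε`; hence its penalty is at least `C' - ε` and
`L̂(V) ≥ H[Y | X_V] + λ(C' - ε)`. Both lower bounds are Gibbs' inequality. Finally
`H[Y | X_Φ̄] ≤ H[Y]` and the choice of `λ` make the first bound smaller than the second.
-/

open Finset

lemma neg_mul_log_div_nonneg {p q : ℝ} (hp : 0 ≤ p) (hpq : p ≤ q) :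
    0 ≤ -(p * Real.log (p / q)) :=
  neg_nonneg.2 <| mul_nonpos_of_nonneg_of_nonpos hp <|
    Real.log_nonpos (div_nonneg hp (hp.trans hpq)) (div_le_one_of_le₀ hpq (hp.trans hpq))

lemma neg_mul_log_div_le {p S q : ℝ} (hp : 0 ≤ p) (hpS : p ≤ S) (hq : 0 ≤ q)
    (hpq : 0 < p → 0 < q) :
    -(p * Real.log (p / S)) ≤ p * -Real.log q + (S * q - p) := by
  rcases hp.eq_or_lt with rfl | hp
  · simpa using mul_nonneg hpS hq
  have hS : 0 < S := hp.trans_le hpS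
  have hq := hpq hp
  have hlog : Real.log (S * q / p) = Real.log q - Real.log (p / S) := by
    rw [Real.log_div (by positivity) hp.ne', Real.log_mul hS.ne' hq.ne',
      Real.log_div hp.ne' hS.ne']
    ring
  have hle := mul_le_mul_of_nonneg_left (Real.log_le_sub_one_of_pos (by positivity : 0 < S * q / p))
    hp.le
  rw [hlog, show p * (S * q / p - 1) = S * q - p by field_simp] at hle
  linarith

/-- Gibbs' inequality, with `p` unnormalised and `q` a sub-probability. -/
lemma sum_neg_mul_log_div_le_sum_mul_neg_log {ι : Type*} [Fintype ι] (p q : ι → ℝ)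
    (hp : ∀ i, 0 ≤ p i) (hq : ∀ i, 0 ≤ q i) (hq1 : ∑ i, q i ≤ 1) (hpq : ∀ i, 0 < p i → 0 < q i) :
    ∑ i, -(p i * Real.log (p i / ∑ j, p j)) ≤ ∑ i, p i * -Real.log (q i) := by
  set S := ∑ j, p j
  have hS : 0 ≤ S := sum_nonneg fun j _ => hp j
  calc ∑ i, -(p i * Real.log (p i / S))
      ≤ ∑ i, (p i * -Real.log (q i) + (S * q i - p i)) :=
        sum_le_sum fun i _ =>
          neg_mul_log_div_le (hp i) (single_le_sum (fun j _ => hp j) (mem_univ i)) (hq i) (hpq i)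
    _ = ∑ i, p i * -Real.log (q i) + S * (∑ i, q i - 1) := by
        rw [sum_add_distrib, sum_sub_distrib, ← mul_sum]
        ring
    _ ≤ ∑ i, p i * -Real.log (q i) := by nlinarith

lemma ofReal_toReal_mul_neg_log_le_mul_negLog (a b : ℝ≥0∞) :
    ENNReal.ofReal (a.toReal * -Real.log b.toReal) ≤ a * negLog b := by
  rcases eq_or_ne a ⊤ with rfl | ha
  · simp
  unfold negLog
  split_ifs with hb
  · rcases eq_or_ne a 0 with rfl | ha0
    · simp
    · simp [ENNReal.mul_top ha0]
  · rw [ENNReal.ofReal_mul ENNReal.toReal_nonneg, ENNReal.ofReal_toReal ha]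

lemma ofReal_sum_neg_mul_log_div_le_sum_mul_negLog {𝒴 : Type*} [Fintype 𝒴] (ν : 𝒴 → ℝ≥0∞)
    (hν : ∀ y, ν y ≠ ⊤) (q : PMF 𝒴) :
    ENNReal.ofReal (∑ y, -((ν y).toReal * Real.log ((ν y).toReal / (∑ z, ν z).toReal)))
      ≤ ∑ y, ν y * negLog (q y) := by
  by_cases hsupp : ∃ y, ν y ≠ 0 ∧ q y = 0
  · obtain ⟨y, hνy, hqy⟩ := hsupp
    have htop : ν y * negLog (q y) = ⊤ := by simp [negLog, hqy, ENNReal.mul_top hνy]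
    rw [(ENNReal.sum_eq_top (f := fun y => ν y * negLog (q y))).2 ⟨y, mem_univ y, htop⟩]
    exact le_top
  push Not at hsupp
  have hq1 : ∑ y, (q y).toReal = 1 := by
    have := q.tsum_coe
    rw [tsum_fintype] at this
    rw [← ENNReal.toReal_sum fun y _ => q.apply_ne_top y, this, ENNReal.toReal_one]
  have hgibbs := sum_neg_mul_log_div_le_sum_mul_neg_log (fun y => (ν y).toReal)
    (fun y => (q y).toReal) (fun _ => ENNReal.toReal_nonneg) (fun _ => ENNReal.toReal_nonneg)
    hq1.le fun y hy => ENNReal.toReal_pos (hsupp y fun h => by simp [h] at hy) (q.apply_ne_top y)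
  rw [ENNReal.toReal_sum fun y _ => hν y]
  calc _ ≤ ENNReal.ofReal (∑ y, (ν y).toReal * -Real.log (q y).toReal) :=
        ENNReal.ofReal_le_ofReal hgibbs
    _ = ∑ y, ENNReal.ofReal ((ν y).toReal * -Real.log (q y).toReal) :=
        ENNReal.ofReal_sum_of_nonneg fun y _ => mul_nonneg ENNReal.toReal_nonneg <|
          neg_nonneg.2 <| Real.log_nonpos ENNReal.toReal_nonneg <|
            ENNReal.toReal_le_of_le_ofReal zero_le_one (by simpa using q.coe_le_one y)
    _ ≤ ∑ y, ν y * negLog (q y) :=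
        sum_le_sum fun y _ => ofReal_toReal_mul_neg_log_le_mul_negLog _ _

section Measure

variable {Ω α ι 𝒴 𝒲 : Type*} [MeasurableSpace Ω] {ν : Measure Ω}

lemma sum_measure_preimage_singleton_inter [MeasurableSpace α] [MeasurableSingletonClass α]
    {X : Ω → α} (hX : Measurable X) (s : Finset α) (t : Set Ω) :
    ∑ x ∈ s, ν (X ⁻¹' {x} ∩ t) = ν (X ⁻¹' s ∩ t) := by
  simpa only [Measure.restrict_apply (hX (measurableSet_singleton _)),
    Measure.restrict_apply (hX s.measurableSet)] using
    sum_measure_preimage_singleton (μ := ν.restrict t) s fun x _ => hX (measurableSet_singleton x)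

lemma neg_toReal_mul_log_div_nonneg [IsFiniteMeasure ν] {s t : Set Ω} (hst : s ⊆ t) :
    0 ≤ -((ν s).toReal * Real.log ((ν s).toReal / (ν t).toReal)) :=
  neg_mul_log_div_nonneg ENNReal.toReal_nonneg
    (ENNReal.toReal_mono (measure_ne_top ν t) (measure_mono hst))

lemma condEnt_nonneg [IsFiniteMeasure ν] [Fintype 𝒴] [Fintype 𝒲] (Y : Ω → 𝒴) (W : Ω → 𝒲) :
    0 ≤ condEnt ν Y W :=
  sum_nonneg fun _ _ => sum_nonneg fun _ _ => neg_toReal_mul_log_div_nonneg fun _ h => h.2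

lemma condEnt_of_unique [IsProbabilityMeasure ν] [Fintype 𝒴] [Fintype 𝒲] [Unique 𝒲]
    (Y : Ω → 𝒴) (W : Ω → 𝒲) : condEnt ν Y W = shEnt ν Y := by
  have hW : ∀ ω, W ω = default := fun ω => Subsingleton.elim _ _
  simp [condEnt, shEnt, hW]

lemma sum_condEnt_restrict [Fintype ι] [MeasurableSpace ι]
    [MeasurableSingletonClass ι] [Fintype 𝒴] [Fintype 𝒲] {E : Ω → ι} (hE : Measurable E)
    (Y : Ω → 𝒴) (W : Ω → 𝒲) :
    ∑ k, condEnt (ν.restrict {ω | E ω = k}) Y W = condEnt ν Y fun ω => (E ω, W ω) := by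
  have hEk : ∀ k, MeasurableSet {ω | E ω = k} := fun k => hE (measurableSet_singleton k)
  simp only [condEnt, Fintype.sum_prod_type, Measure.restrict_apply' (hEk _)]
  refine sum_congr rfl fun k _ => sum_congr rfl fun w _ => sum_congr rfl fun y _ => ?_
  have hjoint : {ω | Y ω = y ∧ W ω = w} ∩ {ω | E ω = k}
      = {ω | Y ω = y ∧ (E ω, W ω) = (k, w)} := by
    ext; simp [and_comm, and_left_comm]
  have hmarg : {ω | W ω = w} ∩ {ω | E ω = k} = {ω | (E ω, W ω) = (k, w)} := by
    ext; simp [and_comm]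
  rw [hjoint, hmarg]

variable [Fintype α] [Fintype 𝒴] {X : Ω → α} {Y : Ω → 𝒴}

lemma sum_ceRisk_restrict [Fintype ι] [MeasurableSpace ι] [MeasurableSingletonClass ι]
    {E : Ω → ι} (hE : Measurable E) (f : α → PMF 𝒴) :
    ∑ k, ceRisk (ν.restrict {ω | E ω = k}) X Y f = ceRisk ν X Y f := by
  have hEk : ∀ k, MeasurableSet {ω | E ω = k} := fun k => hE (measurableSet_singleton k)
  simp only [ceRisk]
  rw [sum_comm]
  refine sum_congr rfl fun x _ => ?_
  rw [sum_comm]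
  refine sum_congr rfl fun y _ => ?_
  rw [← sum_mul]
  congr 1
  calc ∑ k, ν.restrict {ω | E ω = k} {ω | X ω = x ∧ Y ω = y}
      = ∑ k, ν (E ⁻¹' {k} ∩ {ω | X ω = x ∧ Y ω = y}) :=
        sum_congr rfl fun k _ => by rw [Measure.restrict_apply' (hEk k), Set.inter_comm]; rfl
    _ = ν {ω | X ω = x ∧ Y ω = y} := by
        rw [sum_measure_preimage_singleton_inter hE]
        simp

variable [MeasurableSpace α] [MeasurableSingletonClass α] [MeasurableSpace 𝒴]
  [MeasurableSingletonClass 𝒴]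

/-- Gibbs' inequality, applied fibrewise over the values of `W`. -/
lemma ofReal_condEnt_comp_le_ceRisk_comp [IsFiniteMeasure ν] {β : Type*} [Fintype β]
    (hX : Measurable X) (hY : Measurable Y) (W : α → β) (q : β → PMF 𝒴) :
    ENNReal.ofReal (condEnt ν Y (W ∘ X)) ≤ ceRisk ν X Y (q ∘ W) := by
  classical
  have hjoint : ∀ b y, ∑ x with W x = b, ν {ω | X ω = x ∧ Y ω = y}
      = ν {ω | Y ω = y ∧ (W ∘ X) ω = b} := fun b y => by
    refine (sum_measure_preimage_singleton_inter hX _ (Y ⁻¹' {y})).trans (congrArg ν ?_)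
    ext ω
    simp [and_comm]
  have hmarg : ∀ b, ∑ y, ν {ω | Y ω = y ∧ (W ∘ X) ω = b} = ν {ω | (W ∘ X) ω = b} := fun b => by
    refine (sum_measure_preimage_singleton_inter hY univ {ω | (W ∘ X) ω = b}).trans ?_
    simp
  have hrisk : ceRisk ν X Y (q ∘ W)
      = ∑ b, ∑ y, ν {ω | Y ω = y ∧ (W ∘ X) ω = b} * negLog (q b y) := by
    rw [ceRisk, ← sum_fiberwise univ W]
    refine sum_congr rfl fun b _ => ?_
    rw [sum_comm]
    refine sum_congr rfl fun y _ => ?_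
    rw [← hjoint, sum_mul]
    refine sum_congr rfl fun x hx => ?_
    rw [Function.comp_apply, (mem_filter.1 hx).2]
  rw [hrisk, condEnt, ENNReal.ofReal_sum_of_nonneg fun b _ =>
    sum_nonneg fun y _ => neg_toReal_mul_log_div_nonneg fun _ h => h.2]
  refine sum_le_sum fun b _ => ?_
  rw [← hmarg b]
  exact ofReal_sum_neg_mul_log_div_le_sum_mul_negLog _ (fun y => measure_ne_top ν _) (q b)

end Measure

section ZIN

variable {Ω 𝒳 𝒴 𝒵 : Type*} [MeasurableSpace Ω] {μ : Measure Ω} [Fintype 𝒳] [Fintype 𝒴]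
  {d K : ℕ} {X : Ω → Fin d → 𝒳} {Y : Ω → 𝒴} {Z : Ω → 𝒵}
  {𝓕 : Finset (Fin d) → Set ((Fin d → 𝒳) → PMF 𝒴)} {Φ : Finset (Fin d)}

variable (μ X Y Z 𝓕) in
noncomputable def zinPenalty (Φ : Finset (Fin d)) (ρ : 𝒵 → Fin K) (f : (Fin d → 𝒳) → PMF 𝒴) :
    ℝ≥0∞ :=
  ∑ k, (ceRiskW μ X Y Z ρ k f - ⨅ g ∈ 𝓕 Φ, ceRiskW μ X Y Z ρ k g)

variable [Finite 𝒵] [MeasurableSpace 𝒵] [MeasurableSingletonClass 𝒵]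

lemma ceRiskW_eq_ceRisk_restrict (hZ : Measurable Z) (ρ : 𝒵 → Fin K) (k : Fin K)
    (f : (Fin d → 𝒳) → PMF 𝒴) :
    ceRiskW μ X Y Z ρ k f = ceRisk (μ.restrict {ω | ρ (Z ω) = k}) X Y f := by
  have hE : Measurable fun ω => ρ (Z ω) := (measurable_of_finite ρ).comp hZ
  simp only [ceRiskW, ceRisk,
    Measure.restrict_apply' (s := {ω | ρ (Z ω) = k}) (hE (measurableSet_singleton k))]
  exact sum_congr rfl fun x _ => sum_congr rfl fun y _ => by
    rw [Set.inter_comm]; rfl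

lemma sum_ceRiskW (hZ : Measurable Z) (ρ : 𝒵 → Fin K) (f : (Fin d → 𝒳) → PMF 𝒴) :
    ∑ k, ceRiskW μ X Y Z ρ k f = ceRisk μ X Y f := by
  simp only [ceRiskW_eq_ceRisk_restrict hZ]
  exact sum_ceRisk_restrict (E := fun ω => ρ (Z ω)) ((measurable_of_finite ρ).comp hZ) f

lemma ceRisk_sub_le_zinPenalty (hZ : Measurable Z) (ρ : 𝒵 → Fin K) (f : (Fin d → 𝒳) → PMF 𝒴) :
    ceRisk μ X Y f - ∑ k, ⨅ g ∈ 𝓕 Φ, ceRiskW μ X Y Z ρ k g ≤ zinPenalty μ X Y Z 𝓕 Φ ρ f := by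
  rw [← sum_ceRiskW hZ ρ f, tsub_le_iff_right, zinPenalty, ← sum_add_distrib]
  exact sum_le_sum fun k _ => le_tsub_add

variable [MeasurableSpace 𝒳] [MeasurableSingletonClass 𝒳] [Nonempty 𝒴] [MeasurableSpace 𝒴]
  [MeasurableSingletonClass 𝒴]

lemma ofReal_condEnt_mask_le_ceRisk (ν : Measure Ω) [IsFiniteMeasure ν] (hX : Measurable X)
    (hY : Measurable Y) {f : (Fin d → 𝒳) → PMF 𝒴} (hf : DependsOn f (Φ : Set (Fin d))) :
    ENNReal.ofReal (condEnt ν Y (maskFun X Φ)) ≤ ceRisk ν X Y f := by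
  have : Nonempty (PMF 𝒴) := Nonempty.map PMF.pure ‹_›
  obtain ⟨q, rfl⟩ := dependsOn_iff_exists_comp.1 hf
  exact ofReal_condEnt_comp_le_ceRisk_comp (W := fun x (j : Φ) => x j) hX hY q

variable [IsFiniteMeasure μ]

lemma zinPenalty_le (hX : Measurable X) (hY : Measurable Y) (hZ : Measurable Z)
    (h𝓕 : ∀ g ∈ 𝓕 Φ, DependsOn g (Φ : Set (Fin d))) (ρ : 𝒵 → Fin K)
    {f : (Fin d → 𝒳) → PMF 𝒴} (hf : f ∈ 𝓕 Φ) :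
    zinPenalty μ X Y Z 𝓕 Φ ρ f
      ≤ ceRisk μ X Y f - ENNReal.ofReal (condEnt μ Y fun ω => (ρ (Z ω), maskFun X Φ ω)) := by
  set H : Fin K → ℝ≥0∞ := fun k =>
    ENNReal.ofReal (condEnt (μ.restrict {ω | ρ (Z ω) = k}) Y (maskFun X Φ))
  have hH : ∀ k, H k ≤ ⨅ g ∈ 𝓕 Φ, ceRiskW μ X Y Z ρ k g := fun k =>
    le_iInf₂ fun g hg => by
      rw [ceRiskW_eq_ceRisk_restrict hZ]
      exact ofReal_condEnt_mask_le_ceRisk _ hX hY (h𝓕 g hg)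
  have hsumH : ∑ k, H k = ENNReal.ofReal (condEnt μ Y fun ω => (ρ (Z ω), maskFun X Φ ω)) := by
    rw [← ENNReal.ofReal_sum_of_nonneg fun k _ => condEnt_nonneg _ _,
      sum_condEnt_restrict (E := fun ω => ρ (Z ω)) ((measurable_of_finite ρ).comp hZ)]
  rw [← hsumH, ← sum_ceRiskW hZ ρ f]
  refine ENNReal.le_sub_of_add_le_right (by simp [H]) ?_
  rw [zinPenalty, ← sum_add_distrib]
  refine sum_le_sum fun k _ => ?_
  calc _ ≤ ceRiskW μ X Y Z ρ k f - H k + H k := by gcongr; exact hH k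
    _ = ceRiskW μ X Y Z ρ k f := tsub_add_cancel_of_le ((hH k).trans (iInf₂_le f hf))

lemma Lhat_le_of_invariant (hX : Measurable X) (hY : Measurable Y) (hZ : Measurable Z)
    (h𝓕 : ∀ g ∈ 𝓕 Φ, DependsOn g (Φ : Set (Fin d)))
    (hinv : ∀ ρ : 𝒵 → Fin K,
      condEnt μ Y (fun ω => (ρ (Z ω), maskFun X Φ ω)) = condEnt μ Y (maskFun X Φ))
    {lam ε : ℝ} (hlam : 0 ≤ lam) (hε : 0 ≤ ε) {f₀ : (Fin d → 𝒳) → PMF 𝒴} (hf₀ : f₀ ∈ 𝓕 Φ)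
    (hf₀risk : ceRisk μ X Y f₀ ≤ ENNReal.ofReal (condEnt μ Y (maskFun X Φ) + ε)) :
    Lhat μ K X Y Z 𝓕 lam Φ ≤ ENNReal.ofReal (condEnt μ Y (maskFun X Φ) + ε + lam * ε) := by
  refine iInf₂_le_of_le f₀ hf₀ (iSup_le fun ρ => ?_)
  have hpen : zinPenalty μ X Y Z 𝓕 Φ ρ f₀ ≤ ENNReal.ofReal ε := by
    refine (zinPenalty_le hX hY hZ h𝓕 ρ hf₀).trans ?_
    rw [hinv, tsub_le_iff_right, add_comm]
    exact hf₀risk.trans ENNReal.ofReal_add_le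
  have hH := condEnt_nonneg (ν := μ) Y (maskFun X Φ)
  calc _ ≤ ENNReal.ofReal (condEnt μ Y (maskFun X Φ) + ε)
          + ENNReal.ofReal lam * ENNReal.ofReal ε := add_le_add hf₀risk (mul_le_mul_right hpen _)
    _ = _ := by
        rw [← ENNReal.ofReal_mul hlam, ← ENNReal.ofReal_add (by linarith) (mul_nonneg hlam hε)]

lemma ofReal_le_Lhat_of_violation (hX : Measurable X) (hY : Measurable Y) (hZ : Measurable Z)
    (h𝓕 : ∀ g ∈ 𝓕 Φ, DependsOn g (Φ : Set (Fin d))) {lam ε : ℝ} (hlam : 0 ≤ lam) (hε : 0 ≤ ε)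
    (ρ₀ : 𝒵 → Fin K)
    (hopt : ∃ g : Fin K → ((Fin d → 𝒳) → PMF 𝒴), (∀ k, g k ∈ 𝓕 Φ) ∧
      ∑ k, ceRiskW μ X Y Z ρ₀ k (g k) ≤
        ENNReal.ofReal (condEnt μ Y (fun ω => (ρ₀ (Z ω), maskFun X Φ ω)) + ε)) :
    ENNReal.ofReal (condEnt μ Y (maskFun X Φ) + lam * (condEnt μ Y (maskFun X Φ) -
        condEnt μ Y (fun ω => (ρ₀ (Z ω), maskFun X Φ ω)) - ε)) ≤ Lhat μ K X Y Z 𝓕 lam Φ := by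
  obtain ⟨g, hg, hgrisk⟩ := hopt
  set H := condEnt μ Y (maskFun X Φ)
  set Hρ₀ := condEnt μ Y fun ω => (ρ₀ (Z ω), maskFun X Φ ω)
  refine le_iInf₂ fun f hf => le_iSup_of_le ρ₀ ?_
  have hrisk : ENNReal.ofReal H ≤ ceRisk μ X Y f := ofReal_condEnt_mask_le_ceRisk μ hX hY (h𝓕 f hf)
  have hpen : ENNReal.ofReal (H - Hρ₀ - ε) ≤ zinPenalty μ X Y Z 𝓕 Φ ρ₀ f :=
    calc ENNReal.ofReal (H - Hρ₀ - ε)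
        = ENNReal.ofReal H - ENNReal.ofReal (Hρ₀ + ε) := by
          rw [sub_sub, ENNReal.ofReal_sub _ (add_nonneg (condEnt_nonneg _ _) hε)]
      _ ≤ ceRisk μ X Y f - ∑ k, ⨅ g ∈ 𝓕 Φ, ceRiskW μ X Y Z ρ₀ k g :=
          tsub_le_tsub hrisk <|
            (sum_le_sum fun k _ => iInf₂_le (g k) (hg k)).trans hgrisk
      _ ≤ zinPenalty μ X Y Z 𝓕 Φ ρ₀ f := ceRisk_sub_le_zinPenalty hZ ρ₀ f
  calc _ ≤ ENNReal.ofReal H + ENNReal.ofReal lam * ENNReal.ofReal (H - Hρ₀ - ε) := by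
        rw [← ENNReal.ofReal_mul hlam]
        exact ENNReal.ofReal_add_le
    _ ≤ _ := add_le_add hrisk (mul_le_mul_right hpen _)

end ZIN

theorem zin_fails_when_condition1_violated_general
    {Ω 𝒳 𝒴 𝒵 : Type*} [MeasurableSpace Ω] (μ : Measure Ω) [IsProbabilityMeasure μ]
    [Fintype 𝒳] [Fintype 𝒴] [Nonempty 𝒴] [Fintype 𝒵]
    [MeasurableSpace 𝒳] [MeasurableSingletonClass 𝒳]
    [MeasurableSpace 𝒴] [MeasurableSingletonClass 𝒴]
    [MeasurableSpace 𝒵] [MeasurableSingletonClass 𝒵]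
    {d : ℕ} (X : Ω → Fin d → 𝒳) (Y : Ω → 𝒴) (Z : Ω → 𝒵)
    (hX : Measurable X) (hY : Measurable Y) (hZ : Measurable Z)
    (V : Finset (Fin d)) {K : ℕ}
    (𝓕 : Finset (Fin d) → Set ((Fin d → 𝒳) → PMF 𝒴))
    (h𝓕dep : ∀ Φ, ∀ f ∈ 𝓕 Φ, ∀ x x' : Fin d → 𝒳, (∀ j ∈ Φ, x j = x' j) → f x = f x')
    (lam ε δ γ C' : ℝ)
    (hlam0 : 0 ≤ lam) (hε0 : 0 ≤ ε) (hδ1 : δ ≤ 1) (hγ0 : 0 < γ) (hC0 : 0 < C')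
    -- Assumption 1
    (A1 : ∀ (Φ : Finset (Fin d)) (ρ : 𝒵 → Fin K),
      (∃ f ∈ 𝓕 Φ, ceRisk μ X Y f ≤ ENNReal.ofReal (condEnt μ Y (maskFun X Φ) + ε)) ∧
      (∃ g : Fin K → ((Fin d → 𝒳) → PMF 𝒴), (∀ k, g k ∈ 𝓕 Φ) ∧
        ∑ k : Fin K, ceRiskW μ X Y Z ρ k (g k) ≤
          ENNReal.ofReal (condEnt μ Y (fun ω => (ρ (Z ω), maskFun X Φ ω)) + ε)))
    -- Assumption 3
    (A3 : ∀ A B : Finset (Fin d), B.Nonempty → Disjoint A B →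
      condEnt μ Y (maskFun X (A ∪ B)) ≤ condEnt μ Y (maskFun X A) - γ)
    -- Condition 1 is violated with margin `C'` by the partition `ρ₀`
    (ρ₀ : 𝒵 → Fin K)
    (hviol : condEnt μ Y (maskFun X V) -
        condEnt μ Y (fun ω => (ρ₀ (Z ω), maskFun X V ω)) ≥ C')
    -- a mask `Φ̄ ≠ V` satisfying the invariance constraint for every partition
    (Φbar : Finset (Fin d)) (hΦbar : Φbar ≠ V)
    (hΦbarinv : ∀ ρ : 𝒵 → Fin K,
      condEnt μ Y (fun ω => (ρ (Z ω), maskFun X Φbar ω)) = condEnt μ Y (maskFun X Φbar))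
    -- constraints on the constants
    (h1 : ε < δ * C' / 4)
    (h2 : lam > (shEnt μ Y + 2 * ε) / (δ * C' - 4 * ε)) :
    Lhat μ K X Y Z 𝓕 lam Φbar < Lhat μ K X Y Z 𝓕 lam V ∧
    ∃ Φ' : Finset (Fin d), Φ' ≠ V ∧
      Lhat μ K X Y Z 𝓕 lam Φ' < Lhat μ K X Y Z 𝓕 lam V := by
  have h𝓕 : ∀ Φ, ∀ f ∈ 𝓕 Φ, DependsOn f (Φ : Set (Fin d)) := fun Φ f hf x x' => h𝓕dep Φ f hf x x'
  obtain ⟨f₀, hf₀, hf₀risk⟩ := (A1 Φbar ρ₀).1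
  have hupper := Lhat_le_of_invariant hX hY hZ (h𝓕 Φbar) hΦbarinv hlam0 hε0 hf₀ hf₀risk
  have hlower := ofReal_le_Lhat_of_violation hX hY hZ (h𝓕 V) hlam0 hε0 ρ₀ (A1 V ρ₀).2
  have hΦbarY : condEnt μ Y (maskFun X Φbar) ≤ shEnt μ Y := by
    rcases Φbar.eq_empty_or_nonempty with rfl | hne
    · exact (condEnt_of_unique Y _).le
    · have hgain := A3 ∅ Φbar hne (disjoint_empty_left _)
      rw [empty_union, condEnt_of_unique Y (maskFun X ∅)] at hgain
      linarith
  have hV := condEnt_nonneg (ν := μ) Y (maskFun X V)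
  have hΦbar0 := condEnt_nonneg (ν := μ) Y (maskFun X Φbar)
  have hδC : δ * C' - 4 * ε ≤ C' - 2 * ε := by nlinarith
  have hlamC : shEnt μ Y + 2 * ε < lam * (δ * C' - 4 * ε) := (div_lt_iff₀ (by linarith)).1 h2
  have hlt : Lhat μ K X Y Z 𝓕 lam Φbar < Lhat μ K X Y Z 𝓕 lam V := by
    refine hupper.trans_lt (lt_of_lt_of_le ?_ hlower)
    rw [ENNReal.ofReal_lt_ofReal_iff_of_nonneg (by positivity)]
    nlinarith [mul_le_mul_of_nonneg_left hδC hlam0]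
  exact ⟨hlt, Φbar, hΦbar, hlt⟩

/-- **Proposition 1: violation of Condition 1 makes the invariant features unidentifiable.**
Under Assumptions 1–3, if there exists `ρ₀` with
`H[Y | X_V] - H[Y | (ρ₀(Z), X_V)] ≥ C' > 0`, and there exists a mask `Φ̄ ≠ V` satisfying the
invariance constraint for all partitions, then for `ε < δC'/4` and
`λ > (H[Y] + 2ε)/(δC' - 4ε)` one has `L̂(Φ̄) < L̂(V)`; in particular there exists `Φ' ≠ V`
with `L̂(Φ') < L̂(V)`. -/
theorem zin_fails_when_condition1_violated
    {Ω 𝒳 𝒴 𝒵 : Type*} [MeasurableSpace Ω] (μ : Measure Ω) [IsProbabilityMeasure μ]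
    [Fintype 𝒳] [Nonempty 𝒳] [Fintype 𝒴] [Nonempty 𝒴] [Fintype 𝒵] [Nonempty 𝒵]
    [MeasurableSpace 𝒳] [MeasurableSingletonClass 𝒳]
    [MeasurableSpace 𝒴] [MeasurableSingletonClass 𝒴]
    [MeasurableSpace 𝒵] [MeasurableSingletonClass 𝒵]
    {d : ℕ} (X : Ω → Fin d → 𝒳) (Y : Ω → 𝒴) (Z : Ω → 𝒵)
    (hX : Measurable X) (hY : Measurable Y) (hZ : Measurable Z)
    (V : Finset (Fin d)) {K : ℕ} (hK : 1 ≤ K)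
    (𝓕 : Finset (Fin d) → Set ((Fin d → 𝒳) → PMF 𝒴))
    (h𝓕ne : ∀ Φ, (𝓕 Φ).Nonempty)
    (h𝓕dep : ∀ Φ, ∀ f ∈ 𝓕 Φ, ∀ x x' : Fin d → 𝒳, (∀ j ∈ Φ, x j = x' j) → f x = f x')
    (lam ε δ γ C' : ℝ)
    (hlam0 : 0 ≤ lam) (hε0 : 0 ≤ ε) (hδ0 : 0 < δ) (hδ1 : δ ≤ 1) (hγ0 : 0 < γ) (hC0 : 0 < C')
    -- Assumption 1
    (A1 : ∀ (Φ : Finset (Fin d)) (ρ : 𝒵 → Fin K),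
      (∃ f ∈ 𝓕 Φ, ceRisk μ X Y f ≤ ENNReal.ofReal (condEnt μ Y (maskFun X Φ) + ε)) ∧
      (∃ g : Fin K → ((Fin d → 𝒳) → PMF 𝒴), (∀ k, g k ∈ 𝓕 Φ) ∧
        ∑ k : Fin K, ceRiskW μ X Y Z ρ k (g k) ≤
          ENNReal.ofReal (condEnt μ Y (fun ω => (ρ (Z ω), maskFun X Φ ω)) + ε)))
    -- Assumption 2
    (A2 : ∀ A B : Finset (Fin d), A.Nonempty → A ⊆ Finset.univ \ V → ∀ ρ : 𝒵 → Fin K,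
      condEnt μ Y (maskFun X (A ∪ B)) -
          condEnt μ Y (fun ω => (ρ (Z ω), maskFun X (A ∪ B) ω)) ≥
        δ * (condEnt μ Y (maskFun X A) -
          condEnt μ Y (fun ω => (ρ (Z ω), maskFun X A ω))))
    -- Assumption 3
    (A3 : ∀ A B : Finset (Fin d), B.Nonempty → Disjoint A B →
      condEnt μ Y (maskFun X (A ∪ B)) ≤ condEnt μ Y (maskFun X A) - γ)
    -- Condition 1 is violated with margin `C'` by the partition `ρ₀`
    (ρ₀ : 𝒵 → Fin K)
    (hviol : condEnt μ Y (maskFun X V) -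
        condEnt μ Y (fun ω => (ρ₀ (Z ω), maskFun X V ω)) ≥ C')
    -- a mask `Φ̄ ≠ V` satisfying the invariance constraint for every partition
    (Φbar : Finset (Fin d)) (hΦbar : Φbar ≠ V)
    (hΦbarinv : ∀ ρ : 𝒵 → Fin K,
      condEnt μ Y (fun ω => (ρ (Z ω), maskFun X Φbar ω)) = condEnt μ Y (maskFun X Φbar))
    -- constraints on the constants
    (h1 : ε < δ * C' / 4)
    (h2 : lam > (shEnt μ Y + 2 * ε) / (δ * C' - 4 * ε)) :
    Lhat μ K X Y Z 𝓕 lam Φbar < Lhat μ K X Y Z 𝓕 lam V ∧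
    ∃ Φ' : Finset (Fin d), Φ' ≠ V ∧
      Lhat μ K X Y Z 𝓕 lam Φ' < Lhat μ K X Y Z 𝓕 lam V :=
  zin_fails_when_condition1_violated_general μ X Y Z hX hY hZ V 𝓕 h𝓕dep lam ε δ γ C' hlam0 hε0 hδ1
    hγ0 hC0 A1 A3 ρ₀ hviol Φbar hΦbar hΦbarinv h1 h2
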